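/- arXiv:math/0606208 — 4 statements merged into one kernel-verified Lean document; each statement's English description precedes it below -/
import Mathlib

section
/- Let μ = {i_1 < i_2 < ... < i_g} be a set of distinct positive integers with sum M, and let L ≥ 2M. Define p_i = L - 2·Σ_{j∈μ} min(i,j) for i ∈ μ, and the g×g matrix A with entries A_{i,j} = δ_{i,j} p_i + 2 min(i,j) for i,j ∈ μ. Then A is positive definite. -/
open Matrix Finset

/-!
The matrix splits as `A = diag(p) + 2 K` with `K_{st} = min(i_s, i_t)`. The vacancy numbers are
nonnegative because `Σ_u min(i_s, i_u) ≤ M ≤ L / 2`, so it suffices that `K` is positive definite.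
For that, `min(a, b)` counts the `k < a` with also `k < b`, so `K = Bᵀ B` for the 0/1 matrix
`B_{ks} = [k < i_s]`; and `B` is injective because `x_s` is recovered from `y = B x` as
`y_{i_s - 1} - y_{i_s}`, the `i_s` being distinct and positive.
-/

section MinMatrix

variable {ι : Type*}

def stepMatrix (N : ℕ) (a : ι → ℕ) : Matrix (Fin N) ι ℝ :=
  of fun k s => if (k : ℕ) < a s then 1 else 0

lemma stepMatrix_transpose_mul_self {N : ℕ} {a : ι → ℕ} (hN : ∀ s, a s ≤ N) :
    (stepMatrix N a)ᵀ * stepMatrix N a = of fun s t => (min (a s) (a t) : ℝ) := by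
  ext s t
  simp_rw [mul_apply, transpose_apply, stepMatrix, of_apply, ite_zero_mul_ite_zero, mul_one,
    ← lt_min_iff, sum_boole, Fin.card_filter_val_lt,
    min_eq_right (le_trans (min_le_left _ _) (hN s)), Nat.cast_min]

lemma eq_sum_ite_pred_lt_sub_sum_ite_lt [Fintype ι] {a : ι → ℕ} (ha : Function.Injective a)
    (hpos : ∀ s, 0 < a s) (x : ι → ℝ) (s : ι) :
    x s = (∑ t, if a s - 1 < a t then x t else 0) - ∑ t, if a s < a t then x t else 0 := by
  classical
  rw [← sum_sub_distrib, ← Fintype.sum_ite_eq' s x]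
  refine sum_congr rfl fun t _ => ?_
  rcases eq_or_ne s t with rfl | hst
  · simp [Nat.sub_lt (hpos s) one_pos]
  · have hne : a s ≠ a t := ha.ne hst
    have := hpos s
    by_cases hlt : a s < a t
    · simp [hst.symm, hlt, show a s - 1 < a t by omega]
    · simp [hst.symm, hlt, show ¬ a s - 1 < a t by omega]

lemma stepMatrix_mulVec_injective [Fintype ι] {N : ℕ} {a : ι → ℕ} (ha : Function.Injective a)
    (hpos : ∀ s, 0 < a s) (hN : ∀ s, a s ≤ N) : Function.Injective (stepMatrix N a).mulVec := by
  intro x y hxy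
  have tail_eq : ∀ k : ℕ, (∑ t, if k < a t then x t else 0) = ∑ t, if k < a t then y t else 0 := by
    intro k
    by_cases hk : k < N
    · simpa [mulVec, dotProduct, stepMatrix] using congrFun hxy ⟨k, hk⟩
    · have : ∀ t, ¬ k < a t := fun t => by have := hN t; omega
      simp [this]
  funext s
  rw [eq_sum_ite_pred_lt_sub_sum_ite_lt ha hpos x, eq_sum_ite_pred_lt_sub_sum_ite_lt ha hpos y,
    tail_eq, tail_eq]

theorem posDef_min [Fintype ι] {a : ι → ℕ} (ha : Function.Injective a) (hpos : ∀ s, 0 < a s) :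
    (of fun s t => (min (a s) (a t) : ℝ)).PosDef := by
  have hN : ∀ s, a s ≤ univ.sup a := fun s => le_sup (mem_univ s)
  rw [← stepMatrix_transpose_mul_self hN, ← conjTranspose_eq_transpose_of_trivial]
  exact .conjTranspose_mul_self _ (stepMatrix_mulVec_injective ha hpos hN)

end MinMatrix

/-- For `μ = {i_1 < … < i_g}` distinct positive integers with sum `M` and `L ≥ 2M`,
the matrix `A_{st} = δ_{st} p_{i_s} + 2 min(i_s, i_t)` with vacancy numbers
`p_i = L - 2 Σ_{j∈μ} min(i,j)` is positive definite. -/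
theorem stmt3 (g : ℕ) (i : Fin g → ℕ) (hmono : StrictMono i) (hpos : ∀ s, 0 < i s)
    (L : ℕ) (hL : 2 * ∑ s, i s ≤ L)
    (A : Matrix (Fin g) (Fin g) ℝ)
    (hA : ∀ s t, A s t =
      (if s = t then (L : ℝ) - 2 * ∑ u, (min (i s) (i u) : ℝ) else 0)
        + 2 * (min (i s) (i t) : ℝ)) :
    A.PosDef := by
  set p : Fin g → ℝ := fun s => (L : ℝ) - 2 * ∑ u, (min (i s) (i u) : ℝ)
  have hA_eq : A = diagonal p + (2 : ℝ) • of fun s t => (min (i s) (i t) : ℝ) := by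
    ext s t
    simp [hA, p, diagonal_apply]
  have hp : 0 ≤ p := fun s => by
    have hmin : ∑ u, (min (i s) (i u) : ℝ) ≤ ∑ u, (i u : ℝ) :=
      sum_le_sum fun u _ => by exact_mod_cast min_le_right (i s) (i u)
    have hL' : 2 * ∑ u, (i u : ℝ) ≤ L := by exact_mod_cast hL
    simp only [Pi.zero_apply, p]
    linarith
  rw [hA_eq]
  exact PosDef.posSemidef_add (.diagonal hp) ((posDef_min hmono.injective hpos).smul two_pos)
end

section
/- Let μ = {i_1 < i_2 < ... < i_g} be distinct positive integers, L ≥ 2Σ i_s, p_i = L - 2Σ_{j∈μ}min(i,j), and A_{i,j} = δ_{i,j}p_i + 2min(i,j). Then det A = L · p_{i_1} · p_{i_2} · ... · p_{i_{g-1}}. Consequently the quotient group ℤ^g / Aℤ^g has cardinality L·p_{i_1}···p_{i_{g-1}} (assuming all these factors are positive). -/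
/-!
Every column of `A` sums to `L`, since `p_t = L - 2 ∑_s min(i_s, i_t)`. Replacing the last row
by the sum of all rows and then subtracting the last column from the others leaves the last row
`(0, …, 0, L)`; the remaining block is lower triangular with diagonal `p_{i_1}, …, p_{i_{g-1}}`,
because for `s < t` both `min(i_s, i_t)` and `min(i_s, max μ)` equal `i_s`. The index of `Aℤ^g`
is then `|det A|` by the Smith normal form.
-/

open Matrix

namespace Matrix

theorem natCard_quotient_range_mulVecLin {ι : Type*} [Fintype ι] [DecidableEq ι]
    (A : Matrix ι ι ℤ) (hA : A.det ≠ 0) :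
    Nat.card ((ι → ℤ) ⧸ LinearMap.range A.mulVecLin) = A.det.natAbs := by
  have hinj : Function.Injective A.mulVecLin :=
    isLeftRegular_iff_mulVec_injective.mp
      (isRegular_of_isLeftRegular_det (IsRegular.of_ne_zero hA).left).left
  rw [← Submodule.natAbs_det_equiv _ (LinearEquiv.ofInjective _ hinj), ← LinearMap.det_toLin' A]
  rfl

variable {R : Type*} [CommRing R] {n : ℕ}

theorem det_eq_mul_det_sub_last_of_sum_col_eq (B : Matrix (Fin (n + 1)) (Fin (n + 1)) R)
    (c : R) (hc : ∀ t, ∑ s, B s t = c) :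
    B.det =
      c * (of fun s t : Fin n => B s.castSucc t.castSucc - B s.castSucc (Fin.last n)).det := by
  set C := B.updateRow (Fin.last n) fun _ => c
  have hBC : B.det = C.det := by
    have hrows : ∑ k, (1 : R) • B k = fun _ => c := by
      ext t; rw [Finset.sum_apply]; simpa using hc t
    have := det_updateRow_sum B (Fin.last n) fun _ => 1
    rw [hrows, one_smul] at this
    exact this.symm
  set D : Matrix (Fin (n + 1)) (Fin (n + 1)) R :=
    of fun s t => C s t + (if t = Fin.last n then 0 else -1) * C s (Fin.last n)
  have hCD : C.det = D.det := by
    rw [← det_transpose C, ← det_transpose D]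
    exact (det_eq_of_forall_row_eq_smul_add_const _ (Fin.last n) (by simp) fun t s => rfl).symm
  have hD_last : ∀ t, D (Fin.last n) t = if t = Fin.last n then c else 0 := by
    intro t; by_cases ht : t = Fin.last n <;> simp [D, C, ht]
  rw [hBC, hCD, det_succ_row D (Fin.last n), Fin.sum_univ_castSucc]
  simp only [hD_last, Fin.succAbove_last, Fin.castSucc_ne_last, if_false, if_true, mul_zero,
    zero_mul, Finset.sum_const_zero, zero_add]
  rw [← Nat.two_mul, (even_two_mul _).neg_one_pow, one_mul]
  congr 2
  ext s t
  simp [D, C, sub_eq_add_neg, Fin.castSucc_ne_last]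

theorem det_diagonal_add_of_sum_col_eq (p : Fin (n + 1) → R)
    (K : Matrix (Fin (n + 1)) (Fin (n + 1)) R)
    (hK : ∀ s t, s ≤ t → K s t = K s (Fin.last n)) (c : R)
    (hc : ∀ t, ∑ s, (diagonal p + K) s t = c) :
    (diagonal p + K).det = c * ∏ s : Fin n, p s.castSucc := by
  rw [det_eq_mul_det_sub_last_of_sum_col_eq _ c hc, det_of_isLowerTriangular]
  · simp [diagonal_apply, Fin.castSucc_ne_last, fun s => hK s s le_rfl]
  · intro s t (hst : s < t)
    simp [diagonal_apply, Fin.castSucc_ne_last, hst.ne,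
      hK _ _ (Fin.castSucc_lt_castSucc_iff.mpr hst).le]

end Matrix

theorem stmt6_general (g : ℕ) (i : Fin (g + 1) → ℕ) (hmono : StrictMono i)
    (L : ℕ)
    (p : Fin (g + 1) → ℤ)
    (hp : ∀ s, p s = (L : ℤ) - 2 * ∑ t, (min (i s) (i t) : ℤ))
    (hppos : ∀ s, 0 < p s)
    (A : Matrix (Fin (g + 1)) (Fin (g + 1)) ℤ)
    (hA : ∀ s t, A s t = (if s = t then p s else 0) + 2 * (min (i s) (i t) : ℤ)) :
    A.det = (L : ℤ) * ∏ s : Fin g, p s.castSucc ∧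
    (Nat.card ((Fin (g + 1) → ℤ) ⧸ LinearMap.range A.mulVecLin) : ℤ)
      = (L : ℤ) * ∏ s : Fin g, p s.castSucc := by
  set K : Matrix (Fin (g + 1)) (Fin (g + 1)) ℤ := of fun s t => 2 * (min (i s) (i t) : ℤ)
  have hAK : A = diagonal p + K := by
    ext s t; simp [hA, K, diagonal_apply]
  have hK : ∀ s t, s ≤ t → K s t = K s (Fin.last g) := by
    intro s t hst
    simp [K, hmono.monotone hst, hmono.monotone (Fin.le_last s)]
  have hcol : ∀ t, ∑ s, A s t = L := by
    intro t
    simp [hA, Finset.sum_add_distrib, ← Finset.mul_sum, hp, min_comm]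
  have hdet : A.det = L * ∏ s : Fin g, p s.castSucc := by
    rw [hAK] at hcol ⊢
    exact det_diagonal_add_of_sum_col_eq p K hK L hcol
  have hL : (0 : ℤ) < L := by
    have hmin_sum : (0 : ℤ) ≤ ∑ t, (min (i 0) (i t) : ℤ) :=
      Finset.sum_nonneg fun t _ => by positivity
    linarith [hppos 0, hp 0]
  have hdet_pos : 0 < A.det := hdet ▸ mul_pos hL (Finset.prod_pos fun s _ => hppos _)
  refine ⟨hdet, ?_⟩
  rw [natCard_quotient_range_mulVecLin A hdet_pos.ne', Int.natAbs_of_nonneg hdet_pos.le, hdet]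

/-- `det A = L · p_{i_1} ⋯ p_{i_{g-1}}` (product over all parts but the largest), and
consequently the quotient group `ℤ^g / Aℤ^g` has that cardinality. -/
theorem stmt6 (g : ℕ) (i : Fin (g + 1) → ℕ) (hmono : StrictMono i) (hpos : ∀ s, 0 < i s)
    (L : ℕ) (hL : 2 * ∑ s, i s ≤ L)
    (p : Fin (g + 1) → ℤ)
    (hp : ∀ s, p s = (L : ℤ) - 2 * ∑ t, (min (i s) (i t) : ℤ))
    (hppos : ∀ s, 0 < p s)
    (A : Matrix (Fin (g + 1)) (Fin (g + 1)) ℤ)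
    (hA : ∀ s t, A s t = (if s = t then p s else 0) + 2 * (min (i s) (i t) : ℤ)) :
    A.det = (L : ℤ) * ∏ s : Fin g, p s.castSucc ∧
    (Nat.card ((Fin (g + 1) → ℤ) ⧸ LinearMap.range A.mulVecLin) : ℤ)
      = (L : ℤ) * ∏ s : Fin g, p s.castSucc :=
  stmt6_general g i hmono L p hp hppos A hA
end

section
/- Let A be a symmetric positive definite g×g real matrix, Θ(z) = -min_{n∈ℤ^g}{(1/2)nᵀAn + nᵀz}, Γ = Aℤ^g, and suppose A h_1 = L h_1 for the all-ones vector h_1. Define x(k) = Θ(I - p/2 - k h_1) - Θ(I - p/2 - (k-1)h_1) - Θ(I - p/2 - k h_1 + h_∞) + Θ(I - p/2 - (k-1)h_1 + h_∞) for fixed vectors I, p, h_∞ ∈ ℝ^g. Then x(k + L) = x(k) for all k ∈ ℤ, and x(k) is unchanged when I is replaced by I + v for any v ∈ Γ. -/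
open Matrix

noncomputable def qf {g : ℕ} (A : Matrix (Fin g) (Fin g) ℝ) (z : Fin g → ℝ)
    (n : Fin g → ℤ) : ℝ :=
  (1 / 2) * ((fun s => (n s : ℝ)) ⬝ᵥ A.mulVec (fun s => (n s : ℝ)))
    + (fun s => (n s : ℝ)) ⬝ᵥ z

noncomputable def Theta {g : ℕ} (A : Matrix (Fin g) (Fin g) ℝ) (z : Fin g → ℝ) : ℝ :=
  - sInf (Set.range (qf A z))

/-- The quantity `x(k)` from (3.8), built from four values of `Θ`. -/
noncomputable def xv {g : ℕ} (A : Matrix (Fin g) (Fin g) ℝ) (p hinf : Fin g → ℝ)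
    (I : Fin g → ℝ) (k : ℤ) : ℝ :=
  Theta A (I - (2 : ℝ)⁻¹ • p - (k : ℝ) • (fun _ => (1 : ℝ)))
    - Theta A (I - (2 : ℝ)⁻¹ • p - ((k : ℝ) - 1) • (fun _ => (1 : ℝ)))
    - Theta A (I - (2 : ℝ)⁻¹ • p - (k : ℝ) • (fun _ => (1 : ℝ)) + hinf)
    + Theta A (I - (2 : ℝ)⁻¹ • p - ((k : ℝ) - 1) • (fun _ => (1 : ℝ)) + hinf)

/- helper: inf of a translated set -/
lemma sInf_image_sub (S : Set ℝ) (hne : S.Nonempty) (hbd : BddBelow S) (c : ℝ) :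
    sInf ((fun x => x - c) '' S) = sInf S - c := by
  have h := isGLB_csInf hne hbd
  have h2 : IsGLB ((fun x => x - c) '' S) (sInf S - c) := by
    constructor
    · rintro _ ⟨x, hx, rfl⟩
      exact sub_le_sub_right (h.1 hx) c
    · intro b hb
      have hbc : b + c ∈ lowerBounds S := by
        intro x hx
        have := hb ⟨x, hx, rfl⟩
        simp only at this
        linarith
      linarith [h.2 hbc]
  exact h2.csInf_eq (hne.image _)

/- symmetry of the dot product against a symmetric matrix -/
lemma dot_symm {g : ℕ} {A : Matrix (Fin g) (Fin g) ℝ} (hA : A.IsHermitian)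
    (x y : Fin g → ℝ) : x ⬝ᵥ A.mulVec y = y ⬝ᵥ A.mulVec x := by
  rw [Matrix.dotProduct_mulVec, ← Matrix.mulVec_transpose]
  have : Aᵀ = A := by
    have := hA; rwa [Matrix.IsHermitian, Matrix.conjTranspose_eq_transpose_of_trivial] at this
  rw [this, dotProduct_comm]

lemma bddBelow_qf {g : ℕ} {A : Matrix (Fin g) (Fin g) ℝ} (hA : A.PosDef)
    (z : Fin g → ℝ) : BddBelow (Set.range (qf A z)) := by
  classical
  set w : Fin g → ℝ := A⁻¹.mulVec z with hw
  have hAw : A.mulVec w = z := by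
    rw [hw, Matrix.mulVec_mulVec, Matrix.mul_nonsing_inv _ (isUnit_iff_ne_zero.2 hA.det_pos.ne'), Matrix.one_mulVec]
  refine ⟨-(1 / 2) * (w ⬝ᵥ A.mulVec w), ?_⟩
  rintro x ⟨n, rfl⟩
  set nn : Fin g → ℝ := fun s => (n s : ℝ) with hnn
  have h0 : 0 ≤ (nn + w) ⬝ᵥ A.mulVec (nn + w) := by
    have := hA.posSemidef.dotProduct_mulVec_nonneg (nn + w)
    simpa using this
  have hexp : (nn + w) ⬝ᵥ A.mulVec (nn + w)
      = nn ⬝ᵥ A.mulVec nn + 2 * (nn ⬝ᵥ A.mulVec w) + w ⬝ᵥ A.mulVec w := by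
    rw [Matrix.mulVec_add, dotProduct_add, add_dotProduct,
      add_dotProduct, dot_symm hA.isHermitian w nn]
    ring
  have hz : nn ⬝ᵥ z = nn ⬝ᵥ A.mulVec w := by rw [hAw]
  simp only [qf, ← hnn]
  rw [hz]
  nlinarith [h0, hexp]

/-- quasi-periodicity: shifting `z` by a lattice vector `A *ᵥ m` shifts `Θ`. -/
lemma Theta_shift {g : ℕ} {A : Matrix (Fin g) (Fin g) ℝ} (hA : A.PosDef)
    (z : Fin g → ℝ) (m : Fin g → ℤ) :
    Theta A (z + A.mulVec (fun s => (m s : ℝ))) = Theta A z + qf A z m := by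
  classical
  set c : ℝ := qf A z m with hc
  have hrange : Set.range (qf A (z + A.mulVec (fun s => (m s : ℝ))))
      = (fun x => x - c) '' Set.range (qf A z) := by
    ext x
    constructor
    · rintro ⟨n, rfl⟩
      refine ⟨qf A z (n + m), ⟨n + m, rfl⟩, ?_⟩
      simp only [qf, hc]
      have hcast : (fun s => ((n + m) s : ℝ)) = (fun s => (n s : ℝ)) + (fun s => (m s : ℝ)) := by
        funext s; push_cast [Pi.add_apply]; ring
      rw [hcast, Matrix.mulVec_add, dotProduct_add, add_dotProduct,
        add_dotProduct, add_dotProduct,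
        dot_symm hA.isHermitian (fun s => (m s : ℝ)) (fun s => (n s : ℝ)),
        dotProduct_add]
      ring
    · rintro ⟨_, ⟨n, rfl⟩, rfl⟩
      refine ⟨n - m, ?_⟩
      simp only [qf, hc]
      have hcast : (fun s => ((n - m) s : ℝ)) = (fun s => (n s : ℝ)) - (fun s => (m s : ℝ)) := by
        funext s; push_cast [Pi.sub_apply]; ring
      rw [hcast, Matrix.mulVec_sub, dotProduct_sub, sub_dotProduct,
        sub_dotProduct, sub_dotProduct,
        dot_symm hA.isHermitian (fun s => (m s : ℝ)) (fun s => (n s : ℝ))]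
      simp only [dotProduct_add]
      ring
  rw [Theta, Theta, hrange,
    sInf_image_sub _ (Set.range_nonempty _) (bddBelow_qf hA z) c]
  ring

/-- the four-term combination is invariant under a common lattice shift. -/
lemma four_term_shift {g : ℕ} {A : Matrix (Fin g) (Fin g) ℝ} (hA : A.PosDef)
    (a b h : Fin g → ℝ) (m : Fin g → ℤ) :
    Theta A (a + A.mulVec (fun s => (m s : ℝ)))
      - Theta A (b + A.mulVec (fun s => (m s : ℝ)))
      - Theta A (a + A.mulVec (fun s => (m s : ℝ)) + h)
      + Theta A (b + A.mulVec (fun s => (m s : ℝ)) + h)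
    = Theta A a - Theta A b - Theta A (a + h) + Theta A (b + h) := by
  have h1 := Theta_shift hA a m
  have h2 := Theta_shift hA b m
  have h3 := Theta_shift hA (a + h) m
  have h4 := Theta_shift hA (b + h) m
  have e3 : a + A.mulVec (fun s => (m s : ℝ)) + h = a + h + A.mulVec (fun s => (m s : ℝ)) := by
    abel
  have e4 : b + A.mulVec (fun s => (m s : ℝ)) + h = b + h + A.mulVec (fun s => (m s : ℝ)) := by
    abel
  rw [e3, e4, h1, h2, h3, h4]
  have q3 : qf A (a + h) m = qf A a m + (fun s => (m s : ℝ)) ⬝ᵥ h := by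
    simp only [qf, dotProduct_add]; ring
  have q4 : qf A (b + h) m = qf A b m + (fun s => (m s : ℝ)) ⬝ᵥ h := by
    simp only [qf, dotProduct_add]; ring
  rw [q3, q4]
  ring

/-- `x(k)` is periodic in `k` with period `L` and invariant under shifting the angle
variable `I` by any lattice vector `v ∈ Γ = Aℤ^g`. -/
theorem stmt13 (g : ℕ) (A : Matrix (Fin g) (Fin g) ℝ) (hA : A.PosDef)
    (L : ℕ) (hL : A.mulVec (fun _ => 1) = fun _ => (L : ℝ))
    (I p hinf : Fin g → ℝ) :
    (∀ k : ℤ, xv A p hinf I (k + L) = xv A p hinf I k) ∧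
    (∀ (m : Fin g → ℤ) (k : ℤ),
      xv A p hinf (I + A.mulVec (fun s => (m s : ℝ))) k = xv A p hinf I k) := by
  constructor
  · intro k
    set m : Fin g → ℤ := fun _ => -1 with hm
    have hmv : A.mulVec (fun s => (m s : ℝ)) = fun _ => -(L : ℝ) := by
      have : (fun s => (m s : ℝ)) = -(fun _ => (1 : ℝ)) := by funext s; simp [hm]
      rw [this, Matrix.mulVec_neg, hL]
      funext s; simp
    have ha : I - (2 : ℝ)⁻¹ • p - ((k + L : ℤ) : ℝ) • (fun _ => (1 : ℝ))
        = (I - (2 : ℝ)⁻¹ • p - (k : ℝ) • (fun _ => (1 : ℝ)))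
          + A.mulVec (fun s => (m s : ℝ)) := by
      rw [hmv]; funext s
      simp only [Pi.sub_apply, Pi.add_apply, Pi.smul_apply, smul_eq_mul]
      push_cast; ring
    have hb : I - (2 : ℝ)⁻¹ • p - (((k + L : ℤ) : ℝ) - 1) • (fun _ => (1 : ℝ))
        = (I - (2 : ℝ)⁻¹ • p - ((k : ℝ) - 1) • (fun _ => (1 : ℝ)))
          + A.mulVec (fun s => (m s : ℝ)) := by
      rw [hmv]; funext s
      simp only [Pi.sub_apply, Pi.add_apply, Pi.smul_apply, smul_eq_mul]
      push_cast; ring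
    unfold xv
    rw [ha, hb]
    exact four_term_shift hA _ _ hinf m
  · intro m k
    have ha : I + A.mulVec (fun s => (m s : ℝ)) - (2 : ℝ)⁻¹ • p
          - (k : ℝ) • (fun _ => (1 : ℝ))
        = (I - (2 : ℝ)⁻¹ • p - (k : ℝ) • (fun _ => (1 : ℝ)))
          + A.mulVec (fun s => (m s : ℝ)) := by
      funext s
      simp only [Pi.sub_apply, Pi.add_apply, Pi.smul_apply, smul_eq_mul]
      ring
    have hb : I + A.mulVec (fun s => (m s : ℝ)) - (2 : ℝ)⁻¹ • p
          - ((k : ℝ) - 1) • (fun _ => (1 : ℝ))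
        = (I - (2 : ℝ)⁻¹ • p - ((k : ℝ) - 1) • (fun _ => (1 : ℝ)))
          + A.mulVec (fun s => (m s : ℝ)) := by
      funext s
      simp only [Pi.sub_apply, Pi.add_apply, Pi.smul_apply, smul_eq_mul]
      ring
    unfold xv
    rw [ha, hb]
    exact four_term_shift hA _ _ hinf m
end

section
/- Let A be a g×g symmetric positive definite real matrix, and let ϑ_ε(z) = Σ_{n∈ℤ^g} exp(-((1/2)nᵀAn + nᵀz)/ε) for ε > 0 (the sum converges). Then lim_{ε→0+} ε·log ϑ_ε(z) = -min_{n∈ℤ^g}{(1/2)nᵀAn + nᵀz} = Θ(z) for every z ∈ ℝ^g. -/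
/-!
Positive definiteness gives `qf A z n ≥ ∑ᵢ (c nᵢ² - |zᵢ| |nᵢ|)` for some `c > 0`, so the theta
series is dominated by a product of one-dimensional Gaussian series and converges; rescaling
`(A, z) ↦ (A / ε, z / ε)` gives convergence for every `ε > 0`. The limit is a Laplace principle
valid for any `f` with `∑ exp (-f)` summable: with `m = inf f`, a single term gives
`ε log ∑ exp (-f / ε) ≥ -f n`, while for `ε ≤ 1` the bound `(f n - m) / ε ≥ f n - m` gives
`ε log ∑ exp (-f / ε) ≤ -m + ε (m + log ∑ exp (-f))`.
-/

open Matrix Filter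

open Real Set Topology

section Laplace

variable {ι : Type*} {f : ι → ℝ}

lemma bddBelow_range_of_summable_exp_neg (hf : Summable fun i => exp (-f i)) :
    BddBelow (range f) := by
  refine ⟨-log (∑' i, exp (-f i)), forall_mem_range.2 fun i => ?_⟩
  have := log_le_log (exp_pos _) (hf.le_tsum i fun j _ => (exp_pos (-f j)).le)
  rw [log_exp] at this
  linarith

lemma exp_neg_div_le_of_le {m x ε : ℝ} (hm : m ≤ x) (hε : 0 < ε) (hε1 : ε ≤ 1) :
    exp (-x / ε) ≤ exp (m - m / ε) * exp (-x) := by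
  rw [← exp_add, exp_le_exp]
  have : x - m ≤ (x - m) / ε := le_div_self (sub_nonneg.2 hm) hε hε1
  have : -x / ε = -(m / ε) - (x - m) / ε := by ring
  linarith

lemma summable_exp_neg_div (hf : Summable fun i => exp (-f i)) {ε : ℝ} (hε : 0 < ε)
    (hε1 : ε ≤ 1) : Summable fun i => exp (-f i / ε) :=
  (hf.mul_left _).of_nonneg_of_le (fun _ => (exp_pos _).le) fun i =>
    exp_neg_div_le_of_le (csInf_le (bddBelow_range_of_summable_exp_neg hf) (mem_range_self i))
      hε hε1

lemma le_mul_log_tsum_exp_neg_div {ε : ℝ} (hs : Summable fun i => exp (-f i / ε))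
    (hε : 0 < ε) (i : ι) : -f i ≤ ε * log (∑' j, exp (-f j / ε)) := by
  have := log_le_log (exp_pos _) (hs.le_tsum i fun j _ => (exp_pos (-f j / ε)).le)
  rw [log_exp] at this
  exact (div_le_iff₀' hε).1 this

lemma mul_log_tsum_exp_neg_div_le [Nonempty ι] (hf : Summable fun i => exp (-f i)) {ε : ℝ}
    (hε : 0 < ε) (hε1 : ε ≤ 1) :
    ε * log (∑' i, exp (-f i / ε)) ≤
      -sInf (range f) + ε * (sInf (range f) + log (∑' i, exp (-f i))) := by
  set m := sInf (range f)
  have hs := summable_exp_neg_div hf hε hε1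
  have hpos : 0 < ∑' i, exp (-f i / ε) :=
    hs.tsum_pos (fun _ => (exp_pos _).le) (Classical.arbitrary ι) (exp_pos _)
  have hle : ∑' i, exp (-f i / ε) ≤ exp (m - m / ε) * ∑' i, exp (-f i) := by
    rw [← tsum_mul_left]
    exact hs.tsum_le_tsum (fun i => exp_neg_div_le_of_le
      (csInf_le (bddBelow_range_of_summable_exp_neg hf) (mem_range_self i)) hε hε1)
      (hf.mul_left _)
  have hS : 0 < ∑' i, exp (-f i) :=
    hf.tsum_pos (fun _ => (exp_pos _).le) (Classical.arbitrary ι) (exp_pos _)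
  have hlog := log_le_log hpos hle
  rw [log_mul (exp_pos _).ne' hS.ne', log_exp] at hlog
  calc ε * log (∑' i, exp (-f i / ε)) ≤ ε * (m - m / ε + log (∑' i, exp (-f i))) :=
        mul_le_mul_of_nonneg_left hlog hε.le
    _ = -m + ε * (m + log (∑' i, exp (-f i))) := by field_simp; ring

theorem tendsto_mul_log_tsum_exp_neg_div [Nonempty ι] (hf : Summable fun i => exp (-f i)) :
    Tendsto (fun ε => ε * log (∑' i, exp (-f i / ε))) (𝓝[>] 0) (𝓝 (-sInf (range f))) := by
  set m := sInf (range f)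
  have hsmall : ∀ᶠ ε in 𝓝[>] (0 : ℝ), ε ∈ Ioc 0 1 := Ioc_mem_nhdsGT one_pos
  refine tendsto_order.2 ⟨fun a ha => ?_, fun a ha => ?_⟩
  · obtain ⟨_, ⟨i, rfl⟩, hi⟩ := exists_lt_of_csInf_lt (range_nonempty f) (lt_neg_of_lt_neg ha)
    filter_upwards [hsmall] with ε ⟨hε, hε1⟩
    exact (lt_neg_of_lt_neg hi).trans_le
      (le_mul_log_tsum_exp_neg_div (summable_exp_neg_div hf hε hε1) hε i)
  · have hbound : Tendsto (fun ε => -m + ε * (m + log (∑' i, exp (-f i)))) (𝓝[>] 0) (𝓝 (-m)) :=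
      tendsto_nhdsWithin_of_tendsto_nhds (by
        simpa using ((tendsto_id (x := 𝓝 (0 : ℝ))).mul_const _).const_add (-m))
    filter_upwards [hsmall, hbound.eventually (gt_mem_nhds ha)] with ε ⟨hε, hε1⟩ hlt
    exact (mul_log_tsum_exp_neg_div_le hf hε hε1).trans_lt hlt

end Laplace

lemma exists_pos_mul_norm_sq_le {E : Type*} [NormedAddCommGroup E] [NormedSpace ℝ E]
    [ProperSpace E] {Q : E → ℝ} (hQ : Continuous Q) (hsmul : ∀ (t : ℝ) x, Q (t • x) = t ^ 2 * Q x)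
    (hpos : ∀ x ≠ 0, 0 < Q x) : ∃ c > 0, ∀ x, c * ‖x‖ ^ 2 ≤ Q x := by
  have hQ0 : Q 0 = 0 := by simpa using hsmul 0 0
  rcases subsingleton_or_nontrivial E with hE | hE
  · exact ⟨1, one_pos, fun x => by simp [Subsingleton.elim x 0, hQ0]⟩
  obtain ⟨x₀, hx₀, hmin⟩ := (isCompact_sphere (0 : E) 1).exists_isMinOn
    (NormedSpace.sphere_nonempty.2 zero_le_one) hQ.continuousOn
  refine ⟨Q x₀, hpos x₀ (ne_zero_of_mem_unit_sphere ⟨x₀, hx₀⟩), fun x => ?_⟩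
  rcases eq_or_ne x 0 with rfl | hx
  · simp [hQ0]
  have hu : ‖x‖⁻¹ • x ∈ Metric.sphere (0 : E) 1 := by simp [norm_smul, hx]
  have : Q x₀ ≤ Q (‖x‖⁻¹ • x) := hmin hu
  rwa [hsmul, inv_pow, ← div_eq_inv_mul, le_div_iff₀ (by positivity)] at this

lemma Matrix.PosDef.exists_pos_mul_sum_sq_le {ι : Type*} [Fintype ι] {A : Matrix ι ι ℝ}
    (hA : A.PosDef) : ∃ c > 0, ∀ x : ι → ℝ, c * ∑ i, x i ^ 2 ≤ x ⬝ᵥ A *ᵥ x := by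
  obtain ⟨c, hc, h⟩ := exists_pos_mul_norm_sq_le (E := EuclideanSpace ℝ ι)
    (Q := fun v => v.ofLp ⬝ᵥ A *ᵥ v.ofLp) (by fun_prop)
    (fun t x => by simp [mulVec_smul]; ring)
    (fun x hx => by simpa using hA.dotProduct_mulVec_pos (x := x.ofLp) (by simpa using hx))
  exact ⟨c, hc, fun x => by simpa [EuclideanSpace.norm_sq_eq] using h (WithLp.toLp 2 x)⟩

lemma summable_pi_prod_of_nonneg {ι α : Type*} [Fintype ι] {f : ι → α → ℝ}
    (hf : ∀ i a, 0 ≤ f i a) (hs : ∀ i, Summable (f i)) :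
    Summable fun x : ι → α => ∏ i, f i (x i) := by
  classical
  refine summable_of_sum_le (c := ∏ i, ∑' a, f i a)
    (fun x => Finset.prod_nonneg fun i _ => hf i _) fun T => ?_
  calc ∑ x ∈ T, ∏ i, f i (x i)
      ≤ ∑ x ∈ Fintype.piFinset fun i => T.image (· i), ∏ i, f i (x i) :=
        Finset.sum_le_sum_of_subset_of_nonneg
          (fun x hx => Fintype.mem_piFinset.2 fun i => Finset.mem_image_of_mem _ hx)
          (fun _ _ _ => Finset.prod_nonneg fun i _ => hf i _)
    _ = ∏ i, ∑ a ∈ T.image (· i), f i a := (Finset.prod_univ_sum _ _).symm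
    _ ≤ ∏ i, ∑' a, f i a :=
        Finset.prod_le_prod (fun i _ => Finset.sum_nonneg fun a _ => hf i a)
          fun i _ => (hs i).sum_le_tsum _ fun a _ => hf i a

lemma summable_exp_mul_abs_sub_mul_sq (b : ℝ) {c : ℝ} (hc : 0 < c) :
    Summable fun k : ℤ => exp (b * |(k : ℝ)| - c * (k : ℝ) ^ 2) := by
  refine (summable_pow_mul_jacobiTheta₂_term_bound (b / (2 * π)) (div_pos hc pi_pos) 0).congr
    fun k => ?_
  rw [pow_zero, one_mul, Int.cast_abs]
  congr 1
  field_simp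
  ring

lemma qf_smul {g : ℕ} (t : ℝ) (A : Matrix (Fin g) (Fin g) ℝ) (z : Fin g → ℝ) (n : Fin g → ℤ) :
    qf (t • A) (t • z) n = t * qf A z n := by
  simp only [qf, smul_mulVec, dotProduct_smul, smul_eq_mul]
  ring

lemma exists_pos_sum_le_qf {g : ℕ} {A : Matrix (Fin g) (Fin g) ℝ} (hA : A.PosDef)
    (z : Fin g → ℝ) :
    ∃ c > 0, ∀ n : Fin g → ℤ, ∑ i, (c * (n i : ℝ) ^ 2 - |z i| * |(n i : ℝ)|) ≤ qf A z n := by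
  obtain ⟨c, hc, hcoercive⟩ := hA.exists_pos_mul_sum_sq_le
  refine ⟨c / 2, half_pos hc, fun n => ?_⟩
  set x : Fin g → ℝ := fun i => n i
  have hlin : ∑ i, -(|z i| * |x i|) ≤ x ⬝ᵥ z :=
    Finset.sum_le_sum fun i _ => by rw [← abs_mul, mul_comm]; exact neg_abs_le _
  have hquad := hcoercive x
  rw [Finset.sum_neg_distrib] at hlin
  rw [Finset.sum_sub_distrib, ← Finset.mul_sum]
  unfold qf
  linarith

lemma summable_exp_neg_qf {g : ℕ} {A : Matrix (Fin g) (Fin g) ℝ} (hA : A.PosDef)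
    (z : Fin g → ℝ) : Summable fun n : Fin g → ℤ => exp (-qf A z n) := by
  obtain ⟨c, hc, hlb⟩ := exists_pos_sum_le_qf hA z
  refine (summable_pi_prod_of_nonneg (fun _ _ => (exp_pos _).le)
    fun i => summable_exp_mul_abs_sub_mul_sq |z i| hc).of_nonneg_of_le
    (fun _ => (exp_pos _).le) fun n => ?_
  rw [← exp_sum, exp_le_exp, ← neg_le_neg_iff, neg_neg, ← Finset.sum_neg_distrib]
  simpa using hlb n

/-- Ultradiscretization limit: the theta series `ϑ_ε(z) = Σ_n exp(-((1/2)nᵀAn + nᵀz)/ε)`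
converges for every `ε > 0`, and `ε log ϑ_ε(z) → Θ(z)` as `ε → 0⁺`. -/
theorem stmt19 (g : ℕ) (A : Matrix (Fin g) (Fin g) ℝ) (hA : A.PosDef) (z : Fin g → ℝ) :
    (∀ ε : ℝ, 0 < ε → Summable fun n : Fin g → ℤ => Real.exp (-(qf A z n) / ε)) ∧
    Tendsto (fun ε : ℝ => ε * Real.log (∑' n : Fin g → ℤ, Real.exp (-(qf A z n) / ε)))
      (nhdsWithin 0 (Set.Ioi 0)) (nhds (Theta A z)) := by
  have hsum : ∀ ε : ℝ, 0 < ε → Summable fun n : Fin g → ℤ => exp (-(qf A z n) / ε) :=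
    fun ε hε => by
      simpa [qf_smul, neg_div, div_eq_inv_mul] using
        summable_exp_neg_qf (hA.smul (inv_pos.2 hε)) (ε⁻¹ • z)
  exact ⟨hsum, tendsto_mul_log_tsum_exp_neg_div (by simpa using hsum 1 one_pos)⟩
end
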